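/- arXiv:2112.02157 — 9 statements merged into one kernel-verified Lean document; each statement's English description precedes it below -/
import Mathlib

section
/- Let A, B, C ∈ ℂ be a positively oriented nondegenerate triangle with a = |B−C|, b = |C−A|, c = |A−B|, and suppose a² ≠ 2(b²+c²). Then the point P_a with barycentric coordinates (a²−3b²−3c² : b² : c²) with respect to ABC, i.e., P_a = ((a²−3b²−3c²)A + b²B + c²C)/(a²−2b²−2c²), is an isodynamic point of the flank triangle F_a = (A, B_a, C_a); explicitly, |B_a−C_a|·|P_a−A| = |C_a−A|·|P_a−B_a| = |A−B_a|·|P_a−C_a|. -/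
/-- Signed area of the triangle `u v w`, in the plane identified with `ℂ`:
`sArea(u,v,w) = (1/2)·Im(conj(v−u)·(w−u))`. -/
noncomputable def sArea (u v w : ℂ) : ℝ :=
  ((starRingEnd ℂ) (v - u) * (w - u)).im / 2

private lemma abs_key {X1 Y1 X3 Y2 : ℂ}
    (h : X1 * (starRingEnd ℂ) X1 * (Y1 * (starRingEnd ℂ) Y1) =
      X3 * (starRingEnd ℂ) X3 * (Y2 * (starRingEnd ℂ) Y2)) :
    ‖X1‖ * ‖Y1‖ = ‖X3‖ * ‖Y2‖ := by
  rw [Complex.mul_conj, Complex.mul_conj, Complex.mul_conj, Complex.mul_conj] at h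
  have h2 : Complex.normSq X1 * Complex.normSq Y1 =
      Complex.normSq X3 * Complex.normSq Y2 := by exact_mod_cast h
  rw [Complex.norm_def, Complex.norm_def, Complex.norm_def, Complex.norm_def,
    ← Real.sqrt_mul (Complex.normSq_nonneg _), ← Real.sqrt_mul (Complex.normSq_nonneg _), h2]

/-- For a positively oriented nondegenerate triangle `ABC` with side lengths
`a = |B−C|`, `b = |C−A|`, `c = |A−B|` and `a² ≠ 2(b²+c²)`, the point `Pₐ` with
barycentric coordinates `(a²−3b²−3c² : b² : c²)` w.r.t. `ABC` is an isodynamic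
point of the flank triangle `Fₐ = (A, Bₐ, Cₐ)`:
`|Bₐ−Cₐ|·|Pₐ−A| = |Cₐ−A|·|Pₐ−Bₐ| = |A−Bₐ|·|Pₐ−Cₐ|`. -/
theorem isodynamic_of_flank_barycentrics (A B C : ℂ) (hT : 0 < sArea A B C)
    (a b c : ℝ)
    (ha : a = ‖B - C‖) (hb : b = ‖C - A‖)
    (hc : c = ‖A - B‖)
    (hden : a ^ 2 ≠ 2 * (b ^ 2 + c ^ 2))
    (Ba Ca Pa : ℂ)
    (hBa : Ba = A + Complex.exp (-(2 * (Real.pi : ℂ) * Complex.I) / 3) * (B - A))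
    (hCa : Ca = A + Complex.exp (2 * (Real.pi : ℂ) * Complex.I / 3) * (C - A))
    (hPa : Pa = (((a ^ 2 - 3 * b ^ 2 - 3 * c ^ 2 : ℝ) : ℂ) * A + ((b ^ 2 : ℝ) : ℂ) * B +
        ((c ^ 2 : ℝ) : ℂ) * C) / ((a ^ 2 - 2 * b ^ 2 - 2 * c ^ 2 : ℝ) : ℂ)) :
    ‖Ba - Ca‖ * ‖Pa - A‖ =
        ‖Ca - A‖ * ‖Pa - Ba‖ ∧
    ‖Ca - A‖ * ‖Pa - Ba‖ =
        ‖A - Ba‖ * ‖Pa - Ca‖ := by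
  clear hT
  set w : ℂ := Complex.exp (2 * (Real.pi : ℂ) * Complex.I / 3) with hw
  -- basic facts about w
  have hw3 : w ^ 3 = 1 := by
    rw [hw, ← Complex.exp_nat_mul]
    rw [show ((3 : ℕ) : ℂ) * (2 * (Real.pi : ℂ) * Complex.I / 3) = 2 * (Real.pi : ℂ) * Complex.I
      by push_cast; ring]
    exact Complex.exp_two_pi_mul_I
  have hw1 : w ≠ 1 := by
    rw [hw]
    intro h
    rw [Complex.exp_eq_one_iff] at h
    obtain ⟨n, hn⟩ := h
    have h3 : ((2 : ℂ) * (Real.pi : ℂ) * Complex.I) * (1 - 3 * n) = 0 := by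
      linear_combination (3 : ℂ) * hn
    rcases mul_eq_zero.mp h3 with h4 | h4
    · have : ((Real.pi : ℂ)) ≠ 0 := by exact_mod_cast Real.pi_ne_zero
      simp [this, Complex.I_ne_zero] at h4
    · have h5 : ((3 * n : ℤ) : ℂ) = ((1 : ℤ) : ℂ) := by push_cast; linear_combination -h4
      have h6 : (3 * n : ℤ) = 1 := by exact_mod_cast h5
      omega
  have hq : w ^ 2 + w + 1 = 0 := by
    have h0 : (w - 1) * (w ^ 2 + w + 1) = 0 := by linear_combination hw3
    rcases mul_eq_zero.mp h0 with h1 | h1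
    · exact absurd (sub_eq_zero.mp h1) hw1
    · exact h1
  have hinv : Complex.exp (-(2 * (Real.pi : ℂ) * Complex.I) / 3) * w = 1 := by
    rw [hw, ← Complex.exp_add,
      show -(2 * (Real.pi : ℂ) * Complex.I) / 3 + 2 * (Real.pi : ℂ) * Complex.I / 3 = 0 by ring]
    exact Complex.exp_zero
  have hcwe : (starRingEnd ℂ) w = Complex.exp (-(2 * (Real.pi : ℂ) * Complex.I) / 3) := by
    rw [hw, ← Complex.exp_conj]
    congr 1
    simp only [map_div₀, map_mul, map_neg, map_ofNat, Complex.conj_I, Complex.conj_ofReal]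
    ring
  have hcw : (starRingEnd ℂ) w = w ^ 2 := by
    rw [hcwe]
    linear_combination w ^ 2 * hinv - Complex.exp (-(2 * (Real.pi : ℂ) * Complex.I) / 3) * hw3
  have hBae : Complex.exp (-(2 * (Real.pi : ℂ) * Complex.I) / 3) = w ^ 2 := by
    rw [← hcwe, hcw]
  -- conjugates of the vertices
  set cA : ℂ := (starRingEnd ℂ) A with hcA
  set cB : ℂ := (starRingEnd ℂ) B with hcB
  set cC : ℂ := (starRingEnd ℂ) C with hcC
  -- squared side lengths as complex products
  have hA2 : ((a ^ 2 : ℝ) : ℂ) = (B - C) * (cB - cC) := by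
    rw [ha, Complex.sq_norm, hcB, hcC, ← map_sub, ← Complex.mul_conj]
  have hB2 : ((b ^ 2 : ℝ) : ℂ) = (C - A) * (cC - cA) := by
    rw [hb, Complex.sq_norm, hcC, hcA, ← map_sub, ← Complex.mul_conj]
  have hC2 : ((c ^ 2 : ℝ) : ℂ) = (A - B) * (cA - cB) := by
    rw [hc, Complex.sq_norm, hcA, hcB, ← map_sub, ← Complex.mul_conj]
  set D : ℂ := ((a ^ 2 - 2 * b ^ 2 - 2 * c ^ 2 : ℝ) : ℂ) with hD0
  have hsplitD : ((a ^ 2 - 2 * b ^ 2 - 2 * c ^ 2 : ℝ) : ℂ) =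
      ((a ^ 2 : ℝ) : ℂ) - 2 * ((b ^ 2 : ℝ) : ℂ) - 2 * ((c ^ 2 : ℝ) : ℂ) := by
    push_cast; ring
  have hD : D = -(((B - A) + (C - A)) * ((cB - cA) + (cC - cA))) := by
    rw [hD0, hsplitD, hA2, hB2, hC2]; ring
  have hDne : D ≠ 0 := by
    rw [hD0, Ne, Complex.ofReal_eq_zero, sub_eq_zero]
    intro h
    exact hden (by linarith)
  have hDc : (starRingEnd ℂ) D = D := by rw [hD0]; exact Complex.conj_ofReal _
  -- expressions for the relevant differences
  have hsplit : ((a ^ 2 - 3 * b ^ 2 - 3 * c ^ 2 : ℝ) : ℂ) =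
      D - ((b ^ 2 : ℝ) : ℂ) - ((c ^ 2 : ℝ) : ℂ) := by
    rw [hD0]; push_cast; ring
  have F1 : Pa - A = (((b ^ 2 : ℝ) : ℂ) * (B - A) + ((c ^ 2 : ℝ) : ℂ) * (C - A)) / D := by
    rw [hPa, hsplit]
    field_simp
    ring
  have F2 : Pa - Ba =
      ((((b ^ 2 : ℝ) : ℂ) - D * w ^ 2) * (B - A) + ((c ^ 2 : ℝ) : ℂ) * (C - A)) / D := by
    rw [hPa, hBa, hBae, hsplit]
    field_simp
    ring
  have F3 : Pa - Ca =
      (((b ^ 2 : ℝ) : ℂ) * (B - A) + (((c ^ 2 : ℝ) : ℂ) - D * w) * (C - A)) / D := by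
    rw [hPa, hCa, hsplit]
    field_simp
    ring
  have F4 : Ba - Ca = w ^ 2 * (B - A) - w * (C - A) := by
    rw [hBa, hCa, hBae]; ring
  have F5 : Ca - A = w * (C - A) := by rw [hCa]; ring
  have F6 : A - Ba = -(w ^ 2 * (B - A)) := by rw [hBa, hBae]; ring
  have main1 : ‖w ^ 2 * (B - A) - w * (C - A)‖ *
      ‖((b ^ 2 : ℝ) : ℂ) * (B - A) + ((c ^ 2 : ℝ) : ℂ) * (C - A)‖ =
      ‖w * (C - A)‖ *
      ‖(((b ^ 2 : ℝ) : ℂ) - D * w ^ 2) * (B - A) + ((c ^ 2 : ℝ) : ℂ) * (C - A)‖ := by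
    apply abs_key
    simp only [map_sub, map_add, map_mul, map_neg, map_pow, Complex.conj_conj,
      Complex.conj_ofReal, hcw, ← hcA, ← hcB, ← hcC, hDc]
    rw [hD, hB2, hC2, show A - B = -(B - A) by ring, show cA - cB = -(cB - cA) by ring]
    generalize B - A = u
    generalize C - A = v
    generalize cB - cA = ub
    generalize cC - cA = vb
    linear_combination (- u^2*ub*v^2*vb^3*w^4 - u^2*ub^2*v^2*vb^2*w^4 - u^3*ub*v*vb^3*w^4 - u^3*ub^2*v*vb^2*w^4 - u*ub*v^3*vb^3*w^5 - 2*u*ub^2*v^3*vb^2*w^5 - u*ub^3*v^3*vb*w^5 - u^2*ub*v^2*vb^3*w^5 - 2*u^2*ub^2*v^2*vb^2*w^5 - u^2*ub^3*v^2*vb*w^5 + u*ub*v^3*vb^3*w^6 + 2*u*ub^2*v^3*vb^2*w^6 + u*ub^3*v^3*vb*w^6 + 2*u^2*ub*v^2*vb^3*w^6 + 4*u^2*ub^2*v^2*vb^2*w^6 + 2*u^2*ub^3*v^2*vb*w^6 + u^3*ub*v*vb^3*w^6 + 2*u^3*ub^2*v*vb^2*w^6 + u^3*ub^3*v*vb*w^6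 - u*ub*v^3*vb^3*w^7 - 2*u*ub^2*v^3*vb^2*w^7 - u*ub^3*v^3*vb*w^7 - 2*u^2*ub*v^2*vb^3*w^7 - 4*u^2*ub^2*v^2*vb^2*w^7 - 2*u^2*ub^3*v^2*vb*w^7 - u^3*ub*v*vb^3*w^7 - 2*u^3*ub^2*v*vb^2*w^7 - u^3*ub^3*v*vb*w^7) * hq
  have main2 : ‖w * (C - A)‖ *
      ‖(((b ^ 2 : ℝ) : ℂ) - D * w ^ 2) * (B - A) + ((c ^ 2 : ℝ) : ℂ) * (C - A)‖ =
      ‖-(w ^ 2 * (B - A))‖ *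
      ‖((b ^ 2 : ℝ) : ℂ) * (B - A) + (((c ^ 2 : ℝ) : ℂ) - D * w) * (C - A)‖ := by
    apply abs_key
    simp only [map_sub, map_add, map_mul, map_neg, map_pow, Complex.conj_conj,
      Complex.conj_ofReal, hcw, ← hcA, ← hcB, ← hcC, hDc]
    rw [hD, hB2, hC2, show A - B = -(B - A) by ring, show cA - cB = -(cB - cA) by ring]
    generalize B - A = u
    generalize C - A = v
    generalize cB - cA = ub
    generalize cC - cA = vb
    linear_combination (u*ub*v^3*vb^3*w^3 + u*ub^2*v^3*vb^2*w^3 + u^2*ub*v^2*vb^3*w^3 + u^2*ub^2*v^2*vb^2*w^3 - u*ub*v^3*vb^3*w^4 - u*ub^2*v^3*vb^2*w^4 - u^2*ub*v^2*vb^3*w^4 - u^2*ub^2*v^2*vb^2*w^4 + u*ub*v^3*vb^3*w^5 + u*ub^2*v^3*vb^2*w^5 + 2*u^2*ub*v^2*vb^3*w^5 + 2*u^2*ub^2*v^2*vb^2*w^5 + u^3*ub*v*vb^3*w^5 + u^3*ub^2*v*vb^2*w^5 - u^2*ub*v^2*vb^3*w^6 - 2*u^2*ub^2*v^2*vb^2*w^6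 - u^2*ub^3*v^2*vb*w^6 - u^3*ub*v*vb^3*w^6 - 2*u^3*ub^2*v*vb^2*w^6 - u^3*ub^3*v*vb*w^6) * hq
  constructor
  · rw [F4, F1, F5, F2, norm_div, norm_div, ← mul_div_assoc, ← mul_div_assoc, main1]
  · rw [F5, F2, F6, F3, norm_div, norm_div, ← mul_div_assoc, ← mul_div_assoc, main2]
end

section
/- Let A, B, C ∈ ℂ be a positively oriented nondegenerate triangle with a = |B−C|, b = |C−A|, c = |A−B|, and assume a² ≠ 2(b²+c²), b² ≠ 2(c²+a²), c² ≠ 2(a²+b²). Let P_a, P_b, P_c be the points with barycentric coordinates (a²−3b²−3c² : b² : c²), (a² : b²−3c²−3a² : c²), and (a² : b² : c²−3a²−3b²) with respect to ABC (these are the first isodynamic points X15 of the three flank triangles). Then the point K with barycentric coordinates (a² : b² : c²) (the symmedian point X6 of ABC) lies on each of the three lines through A and P_a, through B and P_b, and through C and P_c; in particular the triangle P_aP_bP_c is perspective with ABC at K. -/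
/-- `z` lies on the line through `u` and `v` (their real affine span). -/
def onLine (z u v : ℂ) : Prop := ∃ t : ℝ, z = u + (t : ℂ) * (v - u)

/-- The triangle `PₐP_bP_c` of first isodynamic points of the three flank triangles
(given in barycentric coordinates w.r.t. `ABC`) is perspective with `ABC` at the
symmedian point `K = X₆` of `ABC`: `K` lies on the lines `APₐ`, `BP_b`, `CP_c`. -/
theorem flank_isodynamic_perspective_at_symmedian (A B C : ℂ) (hT : 0 < sArea A B C)
    (a b c : ℝ)
    (ha : a = ‖B - C‖) (hb : b = ‖C - A‖)
    (hc : c = ‖A - B‖)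
    (hdenA : a ^ 2 ≠ 2 * (b ^ 2 + c ^ 2))
    (hdenB : b ^ 2 ≠ 2 * (c ^ 2 + a ^ 2))
    (hdenC : c ^ 2 ≠ 2 * (a ^ 2 + b ^ 2))
    (Pa Pb Pc K : ℂ)
    (hPa : Pa = (((a ^ 2 - 3 * b ^ 2 - 3 * c ^ 2 : ℝ) : ℂ) * A + ((b ^ 2 : ℝ) : ℂ) * B +
        ((c ^ 2 : ℝ) : ℂ) * C) / ((a ^ 2 - 2 * b ^ 2 - 2 * c ^ 2 : ℝ) : ℂ))
    (hPb : Pb = (((a ^ 2 : ℝ) : ℂ) * A + ((b ^ 2 - 3 * c ^ 2 - 3 * a ^ 2 : ℝ) : ℂ) * B +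
        ((c ^ 2 : ℝ) : ℂ) * C) / ((b ^ 2 - 2 * c ^ 2 - 2 * a ^ 2 : ℝ) : ℂ))
    (hPc : Pc = (((a ^ 2 : ℝ) : ℂ) * A + ((b ^ 2 : ℝ) : ℂ) * B +
        ((c ^ 2 - 3 * a ^ 2 - 3 * b ^ 2 : ℝ) : ℂ) * C) / ((c ^ 2 - 2 * a ^ 2 - 2 * b ^ 2 : ℝ) : ℂ))
    (hK : K = (((a ^ 2 : ℝ) : ℂ) * A + ((b ^ 2 : ℝ) : ℂ) * B + ((c ^ 2 : ℝ) : ℂ) * C) /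
        ((a ^ 2 + b ^ 2 + c ^ 2 : ℝ) : ℂ)) :
    onLine K A Pa ∧ onLine K B Pb ∧ onLine K C Pc := by
  -- The sum a² + b² + c² is nonzero, else the triangle degenerates.
  have hs : a ^ 2 + b ^ 2 + c ^ 2 ≠ 0 := by
    intro h
    have hc0 : c = 0 := by nlinarith [sq_nonneg a, sq_nonneg b, sq_nonneg c]
    have hAB : A = B := by
      have := hc0 ▸ hc
      have : ‖A - B‖ = 0 := this.symm
      have := norm_eq_zero.mp this
      linear_combination this
    rw [hAB] at hT
    simp [sArea] at hT
  have hs' : ((a ^ 2 + b ^ 2 + c ^ 2 : ℝ) : ℂ) ≠ 0 := by exact_mod_cast hs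
  have hdA : ((a ^ 2 - 2 * b ^ 2 - 2 * c ^ 2 : ℝ) : ℂ) ≠ 0 := by
    have : a ^ 2 - 2 * b ^ 2 - 2 * c ^ 2 ≠ 0 := fun h => hdenA (by linarith)
    exact_mod_cast this
  have hdB : ((b ^ 2 - 2 * c ^ 2 - 2 * a ^ 2 : ℝ) : ℂ) ≠ 0 := by
    have : b ^ 2 - 2 * c ^ 2 - 2 * a ^ 2 ≠ 0 := fun h => hdenB (by linarith)
    exact_mod_cast this
  have hdC : ((c ^ 2 - 2 * a ^ 2 - 2 * b ^ 2 : ℝ) : ℂ) ≠ 0 := by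
    have : c ^ 2 - 2 * a ^ 2 - 2 * b ^ 2 ≠ 0 := fun h => hdenC (by linarith)
    exact_mod_cast this
  refine ⟨⟨(a ^ 2 - 2 * b ^ 2 - 2 * c ^ 2) / (a ^ 2 + b ^ 2 + c ^ 2), ?_⟩,
    ⟨(b ^ 2 - 2 * c ^ 2 - 2 * a ^ 2) / (a ^ 2 + b ^ 2 + c ^ 2), ?_⟩,
    ⟨(c ^ 2 - 2 * a ^ 2 - 2 * b ^ 2) / (a ^ 2 + b ^ 2 + c ^ 2), ?_⟩⟩ <;>
    subst hK hPa hPb hPc <;> push_cast at hs' hdA hdB hdC ⊢ <;>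
    field_simp <;> rw [mul_sub, mul_div_cancel₀ _ (by intro h; first | exact hdA (by linear_combination h) | exact hdB (by linear_combination h) | exact hdC (by linear_combination h))] <;> ring
end

section
/- For all A, B, C ∈ ℂ, setting A' = B + e^{2πi/3}(A−B) and C' = B + e^{−2πi/3}(C−B) (so that ABC and A'BC' are '30-twin' triangles around B, i.e., A'BC' is the flank-triangle configuration at B), one has A + e^{−iπ/3}(C−A) = A' + e^{iπ/3}(C'−A'); that is, the apex of the equilateral triangle erected on segment AC (on the clockwise side) coincides with the apex of the equilateral triangle erected on segment A'C' (on the counterclockwise side), so the two 30-twin triangles share an inwardly erected equilateral apex. -/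
/-- For all `A B C : ℂ`, with `A' = B + e^{2πi/3}(A−B)` and `C' = B + e^{−2πi/3}(C−B)`
(so `ABC` and `A'BC'` are 30-twin triangles around `B`, i.e. the flank configuration
at `B`), the apex of the equilateral triangle erected on `AC` on the clockwise side
coincides with the apex of the equilateral triangle erected on `A'C'` on the
counterclockwise side: `A + e^{−iπ/3}(C−A) = A' + e^{iπ/3}(C'−A')`. -/
theorem thirty_twins_share_equilateral_apex (A B C A' C' : ℂ)
    (hA' : A' = B + Complex.exp (2 * (Real.pi : ℂ) * Complex.I / 3) * (A - B))
    (hC' : C' = B + Complex.exp (-(2 * (Real.pi : ℂ) * Complex.I) / 3) * (C - B)) :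
    A + Complex.exp (-((Real.pi : ℂ) * Complex.I) / 3) * (C - A) =
      A' + Complex.exp ((Real.pi : ℂ) * Complex.I / 3) * (C' - A') := by
  subst hA' hC'
  set t := Complex.exp ((Real.pi : ℂ) * Complex.I / 3) with ht
  have ht0 : t ≠ 0 := Complex.exp_ne_zero _
  have ht3 : t ^ 3 = -1 := by
    rw [ht, ← Complex.exp_nat_mul, show ((3:ℕ):ℂ) * ((Real.pi:ℂ) * Complex.I / 3) = (Real.pi:ℂ) * Complex.I by push_cast; ring, Complex.exp_pi_mul_I]
  have h2 : Complex.exp (2 * (Real.pi : ℂ) * Complex.I / 3) = t ^ 2 := by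
    rw [ht, ← Complex.exp_nat_mul]
    ring_nf
  have hm2 : Complex.exp (-(2 * (Real.pi : ℂ) * Complex.I) / 3) = (t ^ 2)⁻¹ := by
    rw [h2.symm, ← Complex.exp_neg]
    ring_nf
  have hm1 : Complex.exp (-((Real.pi : ℂ) * Complex.I) / 3) = t⁻¹ := by
    rw [ht, ← Complex.exp_neg]
    ring_nf
  have hinv : t⁻¹ = -t ^ 2 := by
    field_simp
    linear_combination ht3
  have hinv2 : (t ^ 2)⁻¹ = -t := by
    field_simp
    linear_combination ht3
  rw [h2, hm2, hm1, hinv, hinv2]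
  linear_combination (A - B) * ht3
end

section
/- Let B, C ∈ ℂ be distinct and let A ∈ ℂ be such that the triangle ABC is positively oriented. Define B* = A + e^{−2πi/3}(B−A) and C* = A + e^{2πi/3}(C−A) (the flank triangle F₁ at A between the hexagons erected outwardly on AC and on BA), W = B* + e^{−iπ/3}(B−A) (the vertex of the hexagon erected outwardly on AB that is adjacent to B*), and P₂ = B* + e^{2πi/3}(C*−B*) (the apex of the flank triangle F₂ between the hexagon on AB and the regular hexagon erected on the free side B*C* of F₁). Let M = (B+C)/2, E = B + e^{iπ/3}(M−B), and g = (B+M+E)/3 (the circumcenter of the equilateral triangle BME). Then the vertices B*, W, P₂ of F₂ are collinear, i.e., sArea(B*, W, P₂) = 0, if and only if |A−g| = |B−g|, i.e., if and only if A lies on the circumcircle of the equilateral triangle erected on the segment from B to the midpoint M of BC. -/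
lemma exp_pithird : Complex.exp ((Real.pi : ℂ) * Complex.I / 3)
    = (1 + (Real.sqrt 3 : ℝ) * Complex.I) / 2 := by
  have h : (Real.pi : ℂ) * Complex.I / 3 = ((Real.pi / 3 : ℝ) : ℂ) * Complex.I := by
    push_cast; ring
  rw [h, Complex.exp_mul_I, ← Complex.ofReal_cos, ← Complex.ofReal_sin,
    Real.cos_pi_div_three, Real.sin_pi_div_three]
  push_cast; ring

lemma exp_2pithird : Complex.exp (2 * (Real.pi : ℂ) * Complex.I / 3)
    = (-1 + (Real.sqrt 3 : ℝ) * Complex.I) / 2 := by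
  have h : 2 * (Real.pi : ℂ) * Complex.I / 3 = ((2 * Real.pi / 3 : ℝ) : ℂ) * Complex.I := by
    push_cast; ring
  have h23 : (2 * Real.pi / 3 : ℝ) = Real.pi - Real.pi / 3 := by ring
  rw [h, Complex.exp_mul_I, ← Complex.ofReal_cos, ← Complex.ofReal_sin, h23,
    Real.cos_pi_sub, Real.sin_pi_sub, Real.cos_pi_div_three, Real.sin_pi_div_three]
  push_cast; ring

lemma sqrt3_sq : ((Real.sqrt 3 : ℝ) : ℂ) ^ 2 = 3 := by
  norm_cast
  exact Real.sq_sqrt (by norm_num)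

lemma exp_neg_pithird : Complex.exp (-((Real.pi : ℂ) * Complex.I) / 3)
    = (1 - (Real.sqrt 3 : ℝ) * Complex.I) / 2 := by
  have h : -((Real.pi : ℂ) * Complex.I) / 3 = -((Real.pi : ℂ) * Complex.I / 3) := by ring
  rw [h, Complex.exp_neg, exp_pithird]
  refine inv_eq_of_mul_eq_one_right ?_
  linear_combination (-(((Real.sqrt 3 : ℝ) : ℂ) ^ 2) / 4) * Complex.I_sq + (1/4 : ℂ) * sqrt3_sq

lemma exp_neg_2pithird : Complex.exp (-(2 * (Real.pi : ℂ) * Complex.I) / 3)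
    = (-1 - (Real.sqrt 3 : ℝ) * Complex.I) / 2 := by
  have h : -(2 * (Real.pi : ℂ) * Complex.I) / 3 = -(2 * (Real.pi : ℂ) * Complex.I / 3) := by ring
  rw [h, Complex.exp_neg, exp_2pithird]
  refine inv_eq_of_mul_eq_one_right ?_
  linear_combination (-(((Real.sqrt 3 : ℝ) : ℂ) ^ 2) / 4) * Complex.I_sq + (1/4 : ℂ) * sqrt3_sq



/-- With `B, C` distinct and `ABC` positively oriented, build the flank triangle `F₁`
at `A` (vertices `B* = A + e^{−2πi/3}(B−A)`, `C* = A + e^{2πi/3}(C−A)`), the hexagon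
vertex `W = B* + e^{−iπ/3}(B−A)`, and the apex `P₂ = B* + e^{2πi/3}(C*−B*)` of the
second flank triangle `F₂`. Then `F₂` is degenerate, i.e. `sArea(B*, W, P₂) = 0`,
iff `A` lies on the circumcircle of the equilateral triangle `BME` erected on the
segment from `B` to the midpoint `M` of `BC`, i.e. iff `|A−g| = |B−g|` where
`g = (B+M+E)/3` is the circumcenter of that equilateral. -/
theorem zero_area_second_flank_iff_on_circle (A B C : ℂ) (hBC : B ≠ C)
    (hT : 0 < sArea A B C)
    (Bs Cs W P2 M E g : ℂ)
    (hBs : Bs = A + Complex.exp (-(2 * (Real.pi : ℂ) * Complex.I) / 3) * (B - A))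
    (hCs : Cs = A + Complex.exp (2 * (Real.pi : ℂ) * Complex.I / 3) * (C - A))
    (hW : W = Bs + Complex.exp (-((Real.pi : ℂ) * Complex.I) / 3) * (B - A))
    (hP2 : P2 = Bs + Complex.exp (2 * (Real.pi : ℂ) * Complex.I / 3) * (Cs - Bs))
    (hM : M = (B + C) / 2)
    (hE : E = B + Complex.exp ((Real.pi : ℂ) * Complex.I / 3) * (M - B))
    (hg : g = (B + M + E) / 3) :
    sArea Bs W P2 = 0 ↔ ‖A - g‖ = ‖B - g‖ := by
  have key : sArea Bs W P2 = Real.sqrt 3 / 2 * (Complex.normSq (B - g) - Complex.normSq (A - g)) := by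
    subst hg hE hM hP2 hW hCs hBs
    rw [exp_pithird, exp_2pithird, exp_neg_pithird, exp_neg_2pithird]
    simp only [sArea, Complex.normSq_apply, Complex.mul_im, Complex.mul_re,
      Complex.sub_re, Complex.sub_im, Complex.add_re, Complex.add_im,
      Complex.div_re, Complex.div_im, Complex.normSq_apply,
      Complex.one_re, Complex.one_im, Complex.neg_re, Complex.neg_im,
      Complex.I_re, Complex.I_im, Complex.ofReal_re, Complex.ofReal_im,
      Complex.re_ofNat, Complex.im_ofNat, map_sub, map_add,
      Complex.conj_re, Complex.conj_im]
    have hs2 : Real.sqrt 3 ^ 2 = 3 := Real.sq_sqrt (by norm_num)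
    have hs3 : Real.sqrt 3 ^ 3 = 3 * Real.sqrt 3 := by
      rw [pow_succ, hs2]
    ring_nf
    simp only [hs2, hs3]
    ring
  rw [key]
  have h32 : (Real.sqrt 3 / 2 : ℝ) ≠ 0 := by positivity
  rw [mul_eq_zero, or_iff_right h32, sub_eq_zero]
  constructor
  · intro h
    rw [Complex.norm_def, Complex.norm_def, h]
  · intro h
    rw [← Complex.sq_norm, ← Complex.sq_norm, h]
end

section
/- With the satellite construction (hexagon vertices Q_k = O + r·ω^k and satellite apexes P₁ = P, P_{i+1} = Q_{i+1} + e^{2πi/3}(P_i − Q_{i+1})), for every i ≥ 1 the reflection of the apex P_i across its base line equals the reflection of P₁ across the first base line: refl(P_i; Q_i, Q_{i+1}) = refl(P₁; Q₁, Q₂); i.e., the reflections of the apexes of all the satellite flank triangles about their bases coincide in a single point. -/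
/-- Reflection of `z` across the line through the distinct points `u` and `v`:
`refl(z; u, v) = u + (v−u)·conj(z−u)/conj(v−u)`. -/
noncomputable def reflL (z u v : ℂ) : ℂ :=
  u + (v - u) * (starRingEnd ℂ) (z - u) / (starRingEnd ℂ) (v - u)

lemma reflL_closed (u v z k : ℂ) (h : (starRingEnd ℂ) (v - u) ≠ 0)
    (hk : v - u = k * (starRingEnd ℂ) (v - u)) :
    reflL z u v = u + k * (starRingEnd ℂ) (z - u) := by
  unfold reflL
  nth_rewrite 1 [hk]
  rw [mul_right_comm, mul_div_assoc, div_self h, mul_one]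

lemma satellite_step (O r t w z : ℂ) (hr : r ≠ 0) (ht : t ≠ 0) (hw : w ≠ 0) (hw1 : w ≠ 1)
    (hct : (starRingEnd ℂ) t = t⁻¹) (hcw : (starRingEnd ℂ) w = w⁻¹) :
    reflL ((O + r*t*w) + w^2 * (z - (O + r*t*w))) (O + r*t*w) (O + r*t*w^2)
      = reflL z (O + r*t) (O + r*t*w) := by
  have hw1' : w - 1 ≠ 0 := sub_ne_zero.mpr hw1
  have hs : (starRingEnd ℂ) r ≠ 0 := by simpa only [ne_eq, map_eq_zero] using hr
  have h1 : ((O + r*t*w^2) - (O + r*t*w)) ≠ 0 := by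
    have : (O + r*t*w^2) - (O + r*t*w) = r*t*w*(w-1) := by ring
    rw [this]; exact mul_ne_zero (mul_ne_zero (mul_ne_zero hr ht) hw) hw1'
  have h2 : ((O + r*t*w) - (O + r*t)) ≠ 0 := by
    have : (O + r*t*w) - (O + r*t) = r*t*(w-1) := by ring
    rw [this]; exact mul_ne_zero (mul_ne_zero hr ht) hw1'
  have h1' : (starRingEnd ℂ) ((O + r*t*w^2) - (O + r*t*w)) ≠ 0 := by
    simpa only [ne_eq, map_eq_zero] using h1
  have h2' : (starRingEnd ℂ) ((O + r*t*w) - (O + r*t)) ≠ 0 := by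
    simpa only [ne_eq, map_eq_zero] using h2
  rw [reflL_closed _ _ _ (-(r / (starRingEnd ℂ) r) * t^2 * w^3) h1' ?_,
      reflL_closed _ _ _ (-(r / (starRingEnd ℂ) r) * t^2 * w) h2' ?_]
  · simp only [map_add, map_sub, map_mul, map_pow, hct, hcw, inv_pow]
    field_simp [hs, ht, hw]
    ring_nf
  · simp only [map_add, map_sub, map_mul, map_pow, hct, hcw, inv_pow]
    field_simp [hs, ht, hw]
    ring
  · simp only [map_add, map_sub, map_mul, map_pow, hct, hcw, inv_pow]
    field_simp [hs, ht, hw]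
    ring

/-- Satellite construction: `Q k = O + r·ω^k` with `ω = e^{iπ/3}` are the vertices of a
positively oriented regular hexagon, `P₁ = P` and `P_{i+1} = Q_{i+1} + e^{2πi/3}(P_i − Q_{i+1})`
are the satellite apexes. For every `i ≥ 1`, the reflection of the apex `P_i` across its base
line `Q_iQ_{i+1}` equals the reflection of `P₁` across `Q₁Q₂`: all reflected apexes coincide. -/
theorem satellite_reflections_coincide (O r : ℂ) (hr : r ≠ 0)
    (Q : ℕ → ℂ)
    (hQ : ∀ k, Q k = O + r * Complex.exp ((Real.pi : ℂ) * Complex.I / 3) ^ k)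
    (P : ℂ) (Pseq : ℕ → ℂ) (hP1 : Pseq 1 = P)
    (hrec : ∀ i, 1 ≤ i →
      Pseq (i + 1) = Q (i + 1) +
        Complex.exp (2 * (Real.pi : ℂ) * Complex.I / 3) * (Pseq i - Q (i + 1))) :
    ∀ i, 1 ≤ i → reflL (Pseq i) (Q i) (Q (i + 1)) = reflL P (Q 1) (Q 2) := by
  set w := Complex.exp ((Real.pi : ℂ) * Complex.I / 3) with hwdef
  have hw : w ≠ 0 := Complex.exp_ne_zero _
  have hw3 : w ^ 3 = -1 := by
    rw [hwdef, ← Complex.exp_nat_mul]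
    rw [show ((3:ℕ) : ℂ) * ((Real.pi : ℂ) * Complex.I / 3) = (Real.pi : ℂ) * Complex.I by
      push_cast; ring]
    exact Complex.exp_pi_mul_I
  have hw1 : w ≠ 1 := by
    intro h
    rw [h] at hw3
    norm_num at hw3
  have hcw : (starRingEnd ℂ) w = w⁻¹ := by
    rw [hwdef, ← Complex.exp_conj, ← Complex.exp_neg]
    congr 1
    simp [map_div₀, Complex.conj_I, map_ofNat]
    ring
  have hrot : Complex.exp (2 * (Real.pi : ℂ) * Complex.I / 3) = w ^ 2 := by
    rw [hwdef, ← Complex.exp_nat_mul]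
    congr 1
    push_cast; ring
  intro i hi
  induction i, hi using Nat.le_induction with
  | base => rw [hP1]
  | succ i hi ih =>
    rw [← ih]
    have hct : (starRingEnd ℂ) (w ^ i) = (w ^ i)⁻¹ := by
      rw [map_pow, hcw, inv_pow]
    have eq0 : Q i = O + r * w ^ i := hQ i
    have eq1 : Q (i + 1) = O + r * w ^ i * w := by rw [hQ, pow_succ, mul_assoc]
    have eq2 : Q (i + 1 + 1) = O + r * w ^ i * w ^ 2 := by
      rw [hQ]; ring_nf
    rw [hrec i hi, hrot, eq0, eq1, eq2]
    exact satellite_step O r (w ^ i) w (Pseq i) hr (pow_ne_zero _ hw) hw hw1 hct hcw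
end

section
/- With the satellite construction (hexagon vertices Q_k = O + r·ω^k and satellite apexes P₁ = P, P_{i+1} = Q_{i+1} + e^{2πi/3}(P_i − Q_{i+1}), indices of Q taken mod 6), one has P₇ = P₁ for every P ∈ ℂ: the recursion is periodic with period 6. Equivalently, the chain of regular hexagons and flank triangles built around the central hexagon closes up perfectly after six steps, so the construction extends consistently to an infinite grid. -/
/-- Satellite construction: `Q k = O + r·ω^k` with `ω = e^{iπ/3}` are the vertices of a
positively oriented regular hexagon, `P₁ = P` and `P_{i+1} = Q_{i+1} + e^{2πi/3}(P_i − Q_{i+1})`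
are the satellite apexes. Then `P₇ = P₁` for every `P`: the recursion is periodic with
period 6, i.e. the chain of hexagons and flanks closes up perfectly after six steps. -/
theorem satellite_recursion_period_six (O r : ℂ) (hr : r ≠ 0)
    (Q : ℕ → ℂ)
    (hQ : ∀ k, Q k = O + r * Complex.exp ((Real.pi : ℂ) * Complex.I / 3) ^ k)
    (P : ℂ) (Pseq : ℕ → ℂ) (hP1 : Pseq 1 = P)
    (hrec : ∀ i, 1 ≤ i →
      Pseq (i + 1) = Q (i + 1) +
        Complex.exp (2 * (Real.pi : ℂ) * Complex.I / 3) * (Pseq i - Q (i + 1))) :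
    Pseq 7 = Pseq 1 := by
  set t : ℂ := Complex.exp ((Real.pi : ℂ) * Complex.I / 3) with hte
  have harg : (Real.pi : ℂ) * Complex.I / 3 = ((Real.pi / 3 : ℝ) : ℂ) * Complex.I := by
    push_cast; ring
  have hz : Complex.exp (2 * (Real.pi : ℂ) * Complex.I / 3) = t ^ 2 := by
    rw [hte, ← Complex.exp_nat_mul]
    norm_num
    ring_nf
  have ht3 : t ^ 3 = -1 := by
    rw [hte, ← Complex.exp_nat_mul]
    have : ((3 : ℕ) : ℂ) * ((Real.pi : ℂ) * Complex.I / 3) = (Real.pi : ℂ) * Complex.I := by push_cast; ring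
    rw [this, Complex.exp_pi_mul_I]
  have htne : t + 1 ≠ 0 := by
    intro h
    have h1 : t = -1 := by linear_combination h
    have h2 : t.im = 0 := by rw [h1]; simp
    rw [hte, harg, Complex.exp_ofReal_mul_I_im, Real.sin_pi_div_three] at h2
    have := Real.sqrt_pos.mpr (by norm_num : (0:ℝ) < 3)
    linarith [h2]
  have ht : t ^ 2 = t - 1 := by
    have hfac : (t + 1) * (t ^ 2 - t + 1) = 0 := by linear_combination ht3
    rcases mul_eq_zero.mp hfac with h | h
    · exact absurd h htne
    · linear_combination h
  have h2 := hrec 1 (by norm_num)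
  have h3 := hrec 2 (by norm_num)
  have h4 := hrec 3 (by norm_num)
  have h5 := hrec 4 (by norm_num)
  have h6 := hrec 5 (by norm_num)
  have h7 := hrec 6 (by norm_num)
  rw [hz] at h2 h3 h4 h5 h6 h7
  rw [hQ] at h2 h3 h4 h5 h6 h7
  norm_num at h2 h3 h4 h5 h6 h7
  rw [h7, h6, h5, h4, h3, h2, hP1]
  linear_combination ((-1)*r*t^12 + (-2)*r*t^11 + (P - r - O)*t^10 + (P + r - O)*t^9
    + 2*r*t^8 + (-P + r + O)*t^7 + (-P + O)*t^6 + (P - O)*t^4 + (P - O)*t^3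
    + (O - P)*t + (O - P)) * ht
end

section
/- With the satellite construction (hexagon vertices Q_k = O + r·ω^k and satellite apexes P₁ = P, P_{i+1} = Q_{i+1} + e^{2πi/3}(P_i − Q_{i+1})), let O' = Q₁ + Q₂ − O (the intersection point of the lines Q₃Q₂ and Q₆Q₁). If P, P̃ ∈ ℂ satisfy |P − O'| = |P̃ − O'|, then Σ_{i=1}^{6} |P_i − Q_{i+1}|² = Σ_{i=1}^{6} |P̃_i − Q_{i+1}|², where P̃_i are the satellite apexes generated from P̃. Consequently the total area (3√3/2)·Σ_{i=1}^{6}|P_i − Q_{i+1}|² of the six regular hexagons erected on the free sides P_iQ_{i+1} of the satellite triangles depends only on |P − O'|, i.e., its iso-curves are circles centered at O'. -/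
set_option maxRecDepth 100000
set_option maxHeartbeats 2000000


/-- Satellite construction: `Q k = O + r·ω^k` with `ω = e^{iπ/3}` are the vertices of a
positively oriented regular hexagon, and the satellite apexes satisfy `P₁ = P`,
`P_{i+1} = Q_{i+1} + e^{2πi/3}(P_i − Q_{i+1})`. Let `O' = Q₁ + Q₂ − O` (the intersection of
lines `Q₃Q₂` and `Q₆Q₁`). If `|P − O'| = |P̃ − O'|` then
`Σ_{i=1}^{6} |P_i − Q_{i+1}|² = Σ_{i=1}^{6} |P̃_i − Q_{i+1}|²`; hence the total area
`(3√3/2)·Σ|P_i − Q_{i+1}|²` of the six hexagons erected on the free sides depends only on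
`|P − O'|`, i.e. its iso-curves are circles centered at `O'`. -/
theorem satellite_hexagon_area_iso_circles (O r : ℂ) (hr : r ≠ 0)
    (Q : ℕ → ℂ)
    (hQ : ∀ k, Q k = O + r * Complex.exp ((Real.pi : ℂ) * Complex.I / 3) ^ k)
    (O' : ℂ) (hO' : O' = Q 1 + Q 2 - O)
    (P Pt : ℂ) (Pseq Ptseq : ℕ → ℂ)
    (hP1 : Pseq 1 = P)
    (hrec : ∀ i, 1 ≤ i →
      Pseq (i + 1) = Q (i + 1) +
        Complex.exp (2 * (Real.pi : ℂ) * Complex.I / 3) * (Pseq i - Q (i + 1)))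
    (hPt1 : Ptseq 1 = Pt)
    (htrec : ∀ i, 1 ≤ i →
      Ptseq (i + 1) = Q (i + 1) +
        Complex.exp (2 * (Real.pi : ℂ) * Complex.I / 3) * (Ptseq i - Q (i + 1)))
    (hdist : ‖P - O'‖ = ‖Pt - O'‖) :
    ∑ i ∈ Finset.Icc 1 6, ‖Pseq i - Q (i + 1)‖ ^ 2 =
      ∑ i ∈ Finset.Icc 1 6, ‖Ptseq i - Q (i + 1)‖ ^ 2 := by
  set w : ℂ := Complex.exp ((Real.pi : ℂ) * Complex.I / 3) with hw
  have h3 : w ^ 3 = -1 := by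
    rw [hw, ← Complex.exp_nat_mul, show ((3 : ℕ) : ℂ) * ((Real.pi : ℂ) * Complex.I / 3)
      = (Real.pi : ℂ) * Complex.I by push_cast; ring, Complex.exp_pi_mul_I]
  have hre : w.re = 1 / 2 := by
    rw [hw, show (Real.pi : ℂ) * Complex.I / 3 = ((Real.pi / 3 : ℝ) : ℂ) * Complex.I by
      push_cast; ring, Complex.exp_ofReal_mul_I_re, Real.cos_pi_div_three]
  have hne : w ≠ -1 := by
    intro h
    rw [h] at hre
    norm_num at hre
  have hfac : (w + 1) * (w ^ 2 - w + 1) = 0 := by linear_combination h3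
  have hw2 : w ^ 2 = w - 1 := by
    rcases mul_eq_zero.mp hfac with h | h
    · exact absurd (by linear_combination h) hne
    · linear_combination h
  have hinv : (starRingEnd ℂ) w * w = 1 := by
    rw [hw, ← Complex.exp_conj, ← Complex.exp_add,
      show (starRingEnd ℂ) ((Real.pi : ℂ) * Complex.I / 3) + (Real.pi : ℂ) * Complex.I / 3
        = 0 by simp [map_div₀, Complex.conj_I, Complex.conj_ofReal, map_ofNat]; ring,
      Complex.exp_zero]
  have hcw : (starRingEnd ℂ) w = 1 - w := by
    have h1 : w * (1 - w) = 1 := by linear_combination -hw2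
    calc (starRingEnd ℂ) w = (starRingEnd ℂ) w * (w * (1 - w)) := by rw [h1, mul_one]
      _ = ((starRingEnd ℂ) w * w) * (1 - w) := by ring
      _ = 1 - w := by rw [hinv, one_mul]
  have hz : Complex.exp (2 * (Real.pi : ℂ) * Complex.I / 3) = w ^ 2 := by
    rw [hw, ← Complex.exp_nat_mul, show ((2 : ℕ) : ℂ) * ((Real.pi : ℂ) * Complex.I / 3)
      = 2 * (Real.pi : ℂ) * Complex.I / 3 by push_cast; ring]
  have hd : (P - O') * (starRingEnd ℂ) (P - O') = (Pt - O') * (starRingEnd ℂ) (Pt - O') := by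
    have h2 : Complex.normSq (P - O') = Complex.normSq (Pt - O') := by
      rw [← Complex.sq_norm, ← Complex.sq_norm, hdist]
    rw [Complex.mul_conj, Complex.mul_conj, h2]
  have hP2 := hrec 1 (by norm_num)
  have hP3 := hrec 2 (by norm_num)
  have hP4 := hrec 3 (by norm_num)
  have hP5 := hrec 4 (by norm_num)
  have hP6 := hrec 5 (by norm_num)
  have hT2 := htrec 1 (by norm_num)
  have hT3 := htrec 2 (by norm_num)
  have hT4 := htrec 3 (by norm_num)
  have hT5 := htrec 4 (by norm_num)
  have hT6 := htrec 5 (by norm_num)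
  rw [hz] at hP2 hP3 hP4 hP5 hP6 hT2 hT3 hT4 hT5 hT6
  rw [hO', hQ 1, hQ 2] at hd
  have hIcc : Finset.Icc 1 6 = ({1, 2, 3, 4, 5, 6} : Finset ℕ) := by decide
  rw [hIcc]
  rw [show ((1:ℕ)+1) = 2 from rfl] at hP2 hT2
  rw [show ((2:ℕ)+1) = 3 from rfl] at hP3 hT3
  rw [show ((3:ℕ)+1) = 4 from rfl] at hP4 hT4
  rw [show ((4:ℕ)+1) = 5 from rfl] at hP5 hT5
  rw [show ((5:ℕ)+1) = 6 from rfl] at hP6 hT6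
  have hsum : ∀ f : ℕ → ℝ, ∑ i ∈ ({1, 2, 3, 4, 5, 6} : Finset ℕ), f i
      = f 1 + f 2 + f 3 + f 4 + f 5 + f 6 := by
    intro f
    simp [Finset.sum_insert, Finset.mem_insert]
    ring
  rw [hsum, hsum]
  simp only [Complex.sq_norm]
  rw [← Complex.ofReal_inj]
  simp only [Complex.ofReal_add, ← Complex.mul_conj]
  rw [hP1] at hP2; rw [hP2] at hP3; rw [hP3] at hP4; rw [hP4] at hP5; rw [hP5] at hP6
  rw [hPt1] at hT2; rw [hT2] at hT3; rw [hT3] at hT4; rw [hT4] at hT5; rw [hT5] at hT6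
  rw [hP1, hPt1, hP2, hP3, hP4, hP5, hP6, hT2, hT3, hT4, hT5, hT6,
    hQ 2, hQ 3, hQ 4, hQ 5, hQ 6, hQ 7]
  simp (config := { maxSteps := 10000000 }) only [map_add, map_sub, map_mul, map_pow, map_one, hcw] at hd ⊢
  set cO := (starRingEnd ℂ) O
  set cr := (starRingEnd ℂ) r
  set cP := (starRingEnd ℂ) P
  set cPt := (starRingEnd ℂ) Pt
  linear_combination (6 : ℂ) * hd + ((11)*P*cr + (-11)*Pt*cr + (-5)*P*cP + (5)*P*cO + (5)*O*cP + (5)*Pt*cPt + (-5)*Pt*cO + (-5)*O*cPt + (6)*w*r*cP + (-5)*w*P*cr + (-5)*w*P*cP + (5)*w*P*cO + (5)*w*O*cP + (-6)*w*r*cPt + (5)*w*Pt*cr + (5)*w*Pt*cPt + (-5)*w*Pt*cO + (-5)*w*O*cPt + (-12)*w^2*P*cr + (1)*w^2*P*cP + (-1)*w^2*P*cO + (-1)*w^2*O*cP + (12)*w^2*r*cP + (12)*w^2*Pt*cr + (-1)*w^2*Pt*cPt + (1)*w^2*Pt*cO + (1)*w^2*O*cPt + (-12)*w^2*r*cPt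 + (-2)*w^3*P*cr + (4)*w^3*P*cP + (-4)*w^3*P*cO + (-4)*w^3*O*cP + (4)*w^3*r*cP + (2)*w^3*Pt*cr + (-4)*w^3*Pt*cPt + (4)*w^3*Pt*cO + (4)*w^3*O*cPt + (-4)*w^3*r*cPt + (1)*w^4*P*cr + (-9)*w^4*r*cP + (5)*w^4*P*cP + (-5)*w^4*P*cO + (-5)*w^4*O*cP + (-1)*w^4*Pt*cr + (9)*w^4*r*cPt + (-5)*w^4*Pt*cPt + (5)*w^4*Pt*cO + (5)*w^4*O*cPt + (-12)*w^5*r*cP + (16)*w^5*P*cr + (-3)*w^5*P*cP + (3)*w^5*P*cO + (3)*w^5*O*cP + (12)*w^5*r*cPt + (-16)*w^5*Pt*cr + (3)*w^5*Pt*cPt + (-3)*w^5*Pt*cO + (-3)*w^5*O*cPt + (-9)*w^6*P*cr + (-1)*w^6*P*cP + (1)*w^6*P*cO + (1)*w^6*O*cP + (3)*w^6*r*cP + (9)*w^6*Pt*cr + (1)*w^6*Pt*cPt + (-1)*w^6*Pt*cO + (-1)*w^6*O*cPt + (-3)*w^6*r*cPt + (15)*w^7*P*cr + (11)*w^7*r*cP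 + (-8)*w^7*P*cP + (8)*w^7*P*cO + (8)*w^7*O*cP + (-15)*w^7*Pt*cr + (-11)*w^7*r*cPt + (8)*w^7*Pt*cPt + (-8)*w^7*Pt*cO + (-8)*w^7*O*cPt + (-40)*w^8*P*cr + (15)*w^8*r*cP + (10)*w^8*P*cP + (-10)*w^8*P*cO + (-10)*w^8*O*cP + (40)*w^8*Pt*cr + (-15)*w^8*r*cPt + (-10)*w^8*Pt*cPt + (10)*w^8*Pt*cO + (10)*w^8*O*cPt + (53)*w^9*P*cr + (-10)*w^9*P*cP + (10)*w^9*P*cO + (10)*w^9*O*cP + (-59)*w^9*r*cP + (-53)*w^9*Pt*cr + (10)*w^9*Pt*cPt + (-10)*w^9*Pt*cO + (-10)*w^9*O*cPt + (59)*w^9*r*cPt + (-84)*w^10*P*cr + (24)*w^10*P*cP + (-24)*w^10*P*cO + (-24)*w^10*O*cP + (92)*w^10*r*cP + (84)*w^10*Pt*cr + (-24)*w^10*Pt*cPt + (24)*w^10*Pt*cO + (24)*w^10*O*cPt + (-92)*w^10*r*cPt + (151)*w^11*P*cr + (-89)*w^11*r*cP + (-38)*w^11*P*cP + (38)*w^11*P*cO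 + (38)*w^11*O*cP + (-151)*w^11*Pt*cr + (89)*w^11*r*cPt + (38)*w^11*Pt*cPt + (-38)*w^11*Pt*cO + (-38)*w^11*O*cPt + (-237)*w^12*P*cr + (49)*w^12*r*cP + (54)*w^12*P*cP + (-54)*w^12*P*cO + (-54)*w^12*O*cP + (237)*w^12*Pt*cr + (-49)*w^12*r*cPt + (-54)*w^12*Pt*cPt + (54)*w^12*Pt*cO + (54)*w^12*O*cPt + (363)*w^13*P*cr + (-84)*w^13*P*cP + (84)*w^13*P*cO + (84)*w^13*O*cP + (-25)*w^13*r*cP + (-363)*w^13*Pt*cr + (84)*w^13*Pt*cPt + (-84)*w^13*Pt*cO + (-84)*w^13*O*cPt + (25)*w^13*r*cPt + (-505)*w^14*P*cr + (100)*w^14*P*cP + (-100)*w^14*P*cO + (-100)*w^14*O*cP + (31)*w^14*r*cP + (505)*w^14*Pt*cr + (-100)*w^14*Pt*cPt + (100)*w^14*Pt*cO + (100)*w^14*O*cPt + (-31)*w^14*r*cPt + (536)*w^15*P*cr + (-16)*w^15*r*cP + (-76)*w^15*P*cP + (76)*w^15*P*cO + (76)*w^15*O*cP + (-536)*w^15*Pt*cr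 + (16)*w^15*r*cPt + (76)*w^15*Pt*cPt + (-76)*w^15*Pt*cO + (-76)*w^15*O*cPt + (-398)*w^16*P*cr + (-24)*w^16*r*cP + (35)*w^16*P*cP + (-35)*w^16*P*cO + (-35)*w^16*O*cP + (398)*w^16*Pt*cr + (24)*w^16*r*cPt + (-35)*w^16*Pt*cPt + (35)*w^16*Pt*cO + (35)*w^16*O*cPt + (199)*w^17*P*cr + (-9)*w^17*P*cP + (9)*w^17*P*cO + (9)*w^17*O*cP + (41)*w^17*r*cP + (-199)*w^17*Pt*cr + (9)*w^17*Pt*cPt + (-9)*w^17*Pt*cO + (-9)*w^17*O*cPt + (-41)*w^17*r*cPt + (-64)*w^18*P*cr + (1)*w^18*P*cP + (-1)*w^18*P*cO + (-1)*w^18*O*cP + (-26)*w^18*r*cP + (64)*w^18*Pt*cr + (-1)*w^18*Pt*cPt + (1)*w^18*Pt*cO + (1)*w^18*O*cPt + (26)*w^18*r*cPt + (12)*w^19*P*cr + (8)*w^19*r*cP + (-12)*w^19*Pt*cr + (-8)*w^19*r*cPt + (-1)*w^20*P*cr + (-1)*w^20*r*cP + (1)*w^20*Pt*cr + (1)*w^20*r*cPt)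 * hw2
end

section
/- Let Q_k = O + r·ω^k (ω = e^{iπ/3}, r ≠ 0) be a positively oriented regular hexagon with center O, and let P ∈ ℂ satisfy P ≠ O and P not lying on any of the six lines Q_iQ_{i+1}. For each i ∈ {1, …, 6}, let F_i be a second isogonic point of the triangle listed as (Q_i, Q_{i+1}, P), i.e., a point lying on each of the three lines through Q_i and N(Q_{i+1}, P), through Q_{i+1} and N(P, Q_i), and through P and N(Q_i, Q_{i+1}). Then every F_i lies on the line through P and O; in particular the six points F₁, …, F₆ are collinear with P and O. -/
/-- `N(v,w) = v + e^{iπ/3}(w−v)`: the apex of the equilateral triangle erected on the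
segment `vw`, on the left of the directed segment `v → w`. -/
noncomputable def N60 (v w : ℂ) : ℂ :=
  v + Complex.exp ((Real.pi : ℂ) * Complex.I / 3) * (w - v)

/-- `F` is a second isogonic point (second Fermat point, `X₁₄`) of the triangle listed in
order `(u, v, w)`: it lies on the lines `u N(v,w)`, `v N(w,u)` and `w N(u,v)`. -/
noncomputable def SecondIsogonic (F u v w : ℂ) : Prop :=
  onLine F u (N60 v w) ∧ onLine F v (N60 w u) ∧ onLine F w (N60 u v)

lemma exp_pi_div_three : Complex.exp ((Real.pi : ℂ) * Complex.I / 3)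
    = (1/2 : ℂ) + (Real.sqrt 3 / 2 : ℝ) * Complex.I := by
  have h : (Real.pi : ℂ) * Complex.I / 3 = ((Real.pi / 3 : ℝ) : ℂ) * Complex.I := by
    push_cast; ring
  rw [h, Complex.exp_mul_I, ← Complex.ofReal_cos, ← Complex.ofReal_sin,
    Real.cos_pi_div_three, Real.sin_pi_div_three]
  push_cast; ring

lemma omega_sq : Complex.exp ((Real.pi : ℂ) * Complex.I / 3) ^ 2
    = Complex.exp ((Real.pi : ℂ) * Complex.I / 3) - 1 := by
  have h3 : ((Real.sqrt 3 : ℝ) : ℂ) ^ 2 = 3 := by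
    norm_cast
    rw [Real.sq_sqrt]; norm_num
  rw [exp_pi_div_three]
  push_cast
  ring_nf
  rw [Complex.I_sq]
  ring_nf
  rw [h3]
  ring

/-- Let `Q k = O + r·ω^k` (`ω = e^{iπ/3}`, `r ≠ 0`) be a positively oriented regular
hexagon with center `O`, and let `P ≠ O` not lie on any of the six side lines `Q_iQ_{i+1}`.
Then any second isogonic point of any of the six inner triangles `(Q_i, Q_{i+1}, P)` lies
on the line through `P` and `O`; in particular all six are collinear with `P` and `O`. -/
theorem second_fermat_of_inner_triangles_collinear (O r : ℂ) (hr : r ≠ 0)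
    (Q : ℕ → ℂ)
    (hQ : ∀ k, Q k = O + r * Complex.exp ((Real.pi : ℂ) * Complex.I / 3) ^ k)
    (P : ℂ) (hPO : P ≠ O)
    (hPside : ∀ i ∈ Finset.Icc 1 6, ¬ onLine P (Q i) (Q (i + 1)))
    (F : ℕ → ℂ)
    (hF : ∀ i ∈ Finset.Icc 1 6, SecondIsogonic (F i) (Q i) (Q (i + 1)) P) :
    ∀ i ∈ Finset.Icc 1 6, onLine (F i) P O := by
  intro i hi
  have hN : N60 (Q i) (Q (i + 1)) = O := by
    rw [N60, hQ i, hQ (i + 1), pow_succ]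
    have := omega_sq
    set E := Complex.exp ((Real.pi : ℂ) * Complex.I / 3) with hE
    linear_combination (r * E ^ i) * this
  have h3 := (hF i hi).2.2
  rwa [hN] at h3
end

section
/- Let A, B, C ∈ ℂ be a positively oriented triangle with a = |B−C|, b = |C−A|, c = |A−B| and S = 2·sArea(A,B,C), and let F_a = (A, B_a, C_a) be the flank triangle at A, with side lengths a' = |B_a−C_a|, b' = |C_a−A| and c' = |A−B_a|, and S' = 2·sArea(A, C_a, B_a) (twice the signed area of F_a taken with its positive orientation). Then a'² + b'² + c'² − 2√3·S' = a² + b² + c² − 2√3·S; i.e., the quantity (sum of squared side lengths) − 2√3·(twice the area) is conserved when passing from a triangle to any of its flank triangles, and hence is invariant over all triangles of the hexagonal grid. -/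
lemma cos_two_pi_div_three : Real.cos (2 * Real.pi / 3) = -(1/2) := by
  have : (2 * Real.pi / 3 : ℝ) = Real.pi - Real.pi / 3 := by ring
  rw [this, Real.cos_pi_sub, Real.cos_pi_div_three]

lemma sin_two_pi_div_three : Real.sin (2 * Real.pi / 3) = Real.sqrt 3 / 2 := by
  have : (2 * Real.pi / 3 : ℝ) = Real.pi - Real.pi / 3 := by ring
  rw [this, Real.sin_pi_sub, Real.sin_pi_div_three]

lemma exp_two_pi_div_three :
    Complex.exp (2 * (Real.pi : ℂ) * Complex.I / 3) =
      Complex.ofReal (-(1/2)) + Complex.ofReal (Real.sqrt 3 / 2) * Complex.I := by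
  have h : (2 * (Real.pi : ℂ) * Complex.I / 3) = ((2 * Real.pi / 3 : ℝ) : ℂ) * Complex.I := by
    push_cast; ring
  rw [h, Complex.exp_mul_I, ← Complex.ofReal_cos, ← Complex.ofReal_sin, cos_two_pi_div_three, sin_two_pi_div_three]

lemma exp_neg_two_pi_div_three :
    Complex.exp (-(2 * (Real.pi : ℂ) * Complex.I) / 3) =
      Complex.ofReal (-(1/2)) - Complex.ofReal (Real.sqrt 3 / 2) * Complex.I := by
  have h : (-(2 * (Real.pi : ℂ) * Complex.I) / 3) = ((-(2 * Real.pi / 3) : ℝ) : ℂ) * Complex.I := by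
    push_cast; ring
  rw [h, Complex.exp_mul_I, ← Complex.ofReal_cos, ← Complex.ofReal_sin, Real.cos_neg, Real.sin_neg, cos_two_pi_div_three, sin_two_pi_div_three]
  push_cast; ring

/-- For a positively oriented triangle `ABC` with side lengths `a, b, c`, `S = 2·sArea(A,B,C)`,
and flank triangle `Fₐ = (A, Bₐ, Cₐ)` with side lengths `a' = |Bₐ−Cₐ|`, `b' = |Cₐ−A|`,
`c' = |A−Bₐ|` and `S' = 2·sArea(A, Cₐ, Bₐ)` (twice its positively oriented signed area),
the quantity (sum of squared side lengths) − 2√3·(twice the area) is conserved: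
`a'² + b'² + c'² − 2√3·S' = a² + b² + c² − 2√3·S`. -/
theorem flank_conserved_quantity (A B C : ℂ) (hT : 0 < sArea A B C)
    (a b c S : ℝ)
    (ha : a = ‖B - C‖) (hb : b = ‖C - A‖)
    (hc : c = ‖A - B‖) (hS : S = 2 * sArea A B C)
    (Ba Ca : ℂ)
    (hBa : Ba = A + Complex.exp (-(2 * (Real.pi : ℂ) * Complex.I) / 3) * (B - A))
    (hCa : Ca = A + Complex.exp (2 * (Real.pi : ℂ) * Complex.I / 3) * (C - A))
    (a' b' c' S' : ℝ)
    (ha' : a' = ‖Ba - Ca‖) (hb' : b' = ‖Ca - A‖)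
    (hc' : c' = ‖A - Ba‖) (hS' : S' = 2 * sArea A Ca Ba) :
    a' ^ 2 + b' ^ 2 + c' ^ 2 - 2 * Real.sqrt 3 * S' =
      a ^ 2 + b ^ 2 + c ^ 2 - 2 * Real.sqrt 3 * S := by
  have hs : Real.sqrt 3 ^ 2 = 3 := Real.sq_sqrt (by norm_num)
  subst hBa hCa ha hb hc hS ha' hb' hc' hS'
  rw [exp_two_pi_div_three, exp_neg_two_pi_div_three]
  simp only [Complex.sq_norm, sArea, Complex.normSq_apply, Complex.sub_re, Complex.sub_im,
    Complex.add_re, Complex.add_im, Complex.mul_re, Complex.mul_im, Complex.ofReal_re,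
    Complex.ofReal_im, Complex.I_re, Complex.I_im, map_sub, Complex.conj_re, Complex.conj_im]
  have hs3 : Real.sqrt 3 ^ 3 = 3 * Real.sqrt 3 := by
    linear_combination Real.sqrt 3 * hs
  ring_nf
  simp only [hs, hs3]
  ring
end
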